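/- In the stacked-book graph G_{m,5} = S_m □ P_5 with m ≥ 3, if an induced matching M saturates the central vertex of the middle layer S_m(3), then |M| ≤ 2m - 3. -/

import Mathlib

open SimpleGraph

/-- The star graph on `m` vertices: vertex `0` is the center, the rest are leaves. -/
def starGraph (m : ℕ) : SimpleGraph (Fin m) :=
  SimpleGraph.fromRel (fun i _ => i.val = 0)

/-- `M` is an induced matching of `G`: every element of `M` is an edge of `G`, and no two
distinct edges of `M` share an endpoint or have endpoints joined by an edge of `G`. -/
def IsInducedMatching {V : Type*} (G : SimpleGraph V) (M : Finset (Sym2 V)) : Prop :=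
  ↑M ⊆ G.edgeSet ∧
    ∀ e₁ ∈ M, ∀ e₂ ∈ M, e₁ ≠ e₂ → ∀ u ∈ e₁, ∀ v ∈ e₂, u ≠ v ∧ ¬G.Adj u v

/-- The maximum induced matching number of `G`. -/
noncomputable def im {V : Type*} (G : SimpleGraph V) : ℕ :=
  sSup {k | ∃ M : Finset (Sym2 V), IsInducedMatching G M ∧ M.card = k}

/-- The stacked-book graph `G_{m,n} = S_m □ P_n`. -/
def stackedBook (m n : ℕ) : SimpleGraph (Fin m × Fin n) :=
  starGraph m □ SimpleGraph.pathGraph n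

/-!
The edge `e₀` of `M` at the centre `c = (0, 2)` of the middle layer dominates all of layer 2
together with `(0, 1)` and `(0, 3)`, so every other edge of `M` lies in the slab of layers
`{0, 1}` or in the slab of layers `{3, 4}`. An edge of the outer slab `{a, b}` (with `b` next
to layer 2) avoids `(0, b)`, so it is either a spoke at `(0, a)`, and then the only edge of the
slab, or a rung `(i, a)(i, b)` with `i ≠ 0`: a slab carries at most `m - 1` edges. If the
partner `w` of `c` lies in layer 2 it also dominates the rungs of its own row, leaving `m - 2`
edges per slab; if `w = (0, 1)` or `w = (0, 3)` it empties the slab on its side. Either way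
`|M| ≤ 1 + 2 (m - 2)` or `|M| ≤ 1 + (m - 1)`.
-/

lemma starGraph_eq_starGraph_zero {m : ℕ} [NeZero m] :
    _root_.starGraph m = SimpleGraph.starGraph (0 : Fin m) := by
  ext i j
  rw [_root_.starGraph, fromRel_adj, Fin.val_eq_zero_iff, Fin.val_eq_zero_iff, starGraph_adj]

lemma stackedBook_adj {m n : ℕ} [NeZero m] {x y : Fin m × Fin n} :
    (stackedBook m n).Adj x y ↔
      (x.1 ≠ y.1 ∧ (x.1 = 0 ∨ y.1 = 0)) ∧ x.2 = y.2 ∨ (pathGraph n).Adj x.2 y.2 ∧ x.1 = y.1 := by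
  rw [stackedBook, starGraph_eq_starGraph_zero, boxProd_adj, starGraph_adj]

namespace IsInducedMatching

variable {V : Type*} {G : SimpleGraph V} {M : Finset (Sym2 V)} {e f : Sym2 V} {u v : V}

lemma adj (hM : IsInducedMatching G M) (h : s(u, v) ∈ M) : G.Adj u v := hM.1 h

lemma eq_of_mem_of_mem (hM : IsInducedMatching G M) (he : e ∈ M) (hf : f ∈ M)
    (hue : u ∈ e) (huf : u ∈ f) : e = f := by
  by_contra hne
  exact (hM.2 e he f hf hne u hue u huf).1 rfl

lemma eq_of_adj (hM : IsInducedMatching G M) (he : e ∈ M) (hf : f ∈ M)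
    (hu : u ∈ e) (hv : v ∈ f) (huv : G.Adj u v) : e = f := by
  by_contra hne
  exact (hM.2 e he f hf hne u hu v hv).2 huv

end IsInducedMatching

open Classical in
noncomputable def slabEdges {m n : ℕ} (M : Finset (Sym2 (Fin m × Fin n))) (a b : Fin n) :
    Finset (Sym2 (Fin m × Fin n)) :=
  M.filter fun e => ∀ v ∈ e, v.2 = a ∨ v.2 = b

section Slab

variable {m n : ℕ} [NeZero m] {M : Finset (Sym2 (Fin m × Fin n))} {a b k : Fin n}
  {w : Fin m × Fin n} {f : Sym2 (Fin m × Fin n)}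

lemma snd_ne_of_mem_of_ne (hM : IsInducedMatching (stackedBook m n) M) (he₀ : s((0, k), w) ∈ M)
    (hf : f ∈ M) (hne : f ≠ s((0, k), w)) {u : Fin m × Fin n} (hu : u ∈ f) : u.2 ≠ k := by
  obtain ⟨i, x⟩ := u
  rintro rfl
  by_cases hi : i = 0
  · subst hi
    exact hne (hM.eq_of_mem_of_mem hf he₀ hu (Sym2.mem_mk_left _ _))
  · exact hne (hM.eq_of_adj hf he₀ hu (Sym2.mem_mk_left _ _)
      (stackedBook_adj.mpr (Or.inl ⟨⟨hi, Or.inr rfl⟩, rfl⟩)))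

lemma not_adj_of_mem_slabEdges (hM : IsInducedMatching (stackedBook m n) M)
    (he₀ : s((0, k), w) ∈ M) (hbk : (pathGraph n).Adj b k) (hak : a ≠ k)
    (hf : f ∈ slabEdges M a b) {u v : Fin m × Fin n} (hu : u ∈ f)
    (hv : v ∈ s((0, k), w)) : ¬(stackedBook m n).Adj u v := by
  intro huv
  have hf' := Finset.mem_filter.mp hf
  have hfe : f = s((0, k), w) := hM.eq_of_adj hf'.1 he₀ hu hv huv
  rcases hf'.2 _ (hfe ▸ Sym2.mem_mk_left _ _) with h | h
  · exact hak h.symm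
  · exact hbk.ne h.symm

lemma mk_zero_notMem_of_mem_slabEdges (hM : IsInducedMatching (stackedBook m n) M)
    (he₀ : s((0, k), w) ∈ M) (hbk : (pathGraph n).Adj b k) (hak : a ≠ k)
    (hf : f ∈ slabEdges M a b) : ((0 : Fin m), b) ∉ f := fun h =>
  not_adj_of_mem_slabEdges hM he₀ hbk hak hf h (Sym2.mem_mk_left _ _)
    (stackedBook_adj.mpr (Or.inr ⟨hbk, rfl⟩))

lemma mem_slabEdges_cases (hM : IsInducedMatching (stackedBook m n) M)
    (he₀ : s((0, k), w) ∈ M) (hbk : (pathGraph n).Adj b k) (hak : a ≠ k)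
    (hf : f ∈ slabEdges M a b) : ((0 : Fin m), a) ∈ f ∨ ∃ i, f = s((i, a), (i, b)) := by
  have hb := mk_zero_notMem_of_mem_slabEdges hM he₀ hbk hak hf
  obtain ⟨hfM, hlayers⟩ := Finset.mem_filter.mp hf
  induction f using Sym2.ind with
  | _ u v =>
  obtain ⟨i, x⟩ := u
  obtain ⟨j, y⟩ := v
  have huv := stackedBook_adj.mp (hM.adj hfM)
  have hxy : (pathGraph n).Adj x y → x ≠ y := Adj.ne
  rw [Sym2.ball] at hlayers
  simp only [Sym2.mem_iff, not_or, Prod.mk.injEq, Sym2.eq_iff] at hb huv hlayers ⊢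
  grind

lemma ne_zero_of_rung_mem_slabEdges (hM : IsInducedMatching (stackedBook m n) M)
    (he₀ : s((0, k), w) ∈ M) (hbk : (pathGraph n).Adj b k) (hak : a ≠ k) {i : Fin m}
    (hi : s((i, a), (i, b)) ∈ slabEdges M a b) : i ≠ 0 := by
  rintro rfl
  exact mk_zero_notMem_of_mem_slabEdges hM he₀ hbk hak hi (Sym2.mem_mk_right _ _)

lemma card_slabEdges_le (hM : IsInducedMatching (stackedBook m n) M)
    (he₀ : s((0, k), w) ∈ M) (hbk : (pathGraph n).Adj b k) (hak : a ≠ k)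
    {S : Finset (Fin m)} (hS : S.Nonempty)
    (hrung : ∀ i, s((i, a), (i, b)) ∈ slabEdges M a b → i ∈ S) :
    (slabEdges M a b).card ≤ S.card := by
  by_cases hspoke : ∃ f ∈ slabEdges M a b, ((0 : Fin m), a) ∈ f
  · obtain ⟨f, hf, hf₀⟩ := hspoke
    have hsub : slabEdges M a b ⊆ {f} := by
      intro g hg
      have hgM := (Finset.mem_filter.mp hg).1
      have hfM := (Finset.mem_filter.mp hf).1
      rw [Finset.mem_singleton]
      rcases mem_slabEdges_cases hM he₀ hbk hak hg with hg₀ | ⟨i, rfl⟩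
      · exact hM.eq_of_mem_of_mem hgM hfM hg₀ hf₀
      · have hi := ne_zero_of_rung_mem_slabEdges hM he₀ hbk hak hg
        exact hM.eq_of_adj hgM hfM (Sym2.mem_mk_left _ _) hf₀
          (stackedBook_adj.mpr (Or.inl ⟨⟨hi, Or.inr rfl⟩, rfl⟩))
    calc (slabEdges M a b).card ≤ ({f} : Finset _).card := Finset.card_le_card hsub
      _ = 1 := Finset.card_singleton f
      _ ≤ S.card := hS.card_pos
  · simp only [not_exists, not_and] at hspoke
    have hsub : slabEdges M a b ⊆ S.image fun i => s((i, a), (i, b)) := by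
      intro g hg
      rcases mem_slabEdges_cases hM he₀ hbk hak hg with hg₀ | ⟨i, rfl⟩
      · exact absurd hg₀ (hspoke g hg)
      · exact Finset.mem_image_of_mem _ (hrung i hg)
    exact (Finset.card_le_card hsub).trans Finset.card_image_le

lemma card_slabEdges_le_sub_one (hM : IsInducedMatching (stackedBook m n) M)
    (he₀ : s((0, k), w) ∈ M) (hbk : (pathGraph n).Adj b k) (hak : a ≠ k) (hm : 2 ≤ m) :
    (slabEdges M a b).card ≤ m - 1 := by
  have hcard : (Finset.univ.erase (0 : Fin m)).card = m - 1 := by simp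
  rw [← hcard]
  refine card_slabEdges_le hM he₀ hbk hak (Finset.card_pos.mp (by omega)) fun i hi => ?_
  exact Finset.mem_erase.mpr ⟨ne_zero_of_rung_mem_slabEdges hM he₀ hbk hak hi, Finset.mem_univ i⟩

lemma card_slabEdges_le_sub_two (hM : IsInducedMatching (stackedBook m n) M)
    (he₀ : s((0, k), w) ∈ M) (hbk : (pathGraph n).Adj b k) (hak : a ≠ k) (hm : 3 ≤ m)
    (hw : w.2 = k) : (slabEdges M a b).card ≤ m - 2 := by
  have hw₁ : w.1 ≠ 0 := fun h => (hM.adj he₀).ne (Prod.ext h.symm hw.symm)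
  have hcard : ((Finset.univ.erase (0 : Fin m)).erase w.1).card = m - 2 := by
    rw [Finset.card_erase_of_mem (by simpa using hw₁)]
    simp only [Finset.mem_univ, Finset.card_erase_of_mem, Finset.card_univ, Fintype.card_fin]
    omega
  rw [← hcard]
  refine card_slabEdges_le hM he₀ hbk hak (Finset.card_pos.mp (by omega)) fun i hi => ?_
  refine Finset.mem_erase.mpr ⟨fun hiw => ?_, Finset.mem_erase.mpr
    ⟨ne_zero_of_rung_mem_slabEdges hM he₀ hbk hak hi, Finset.mem_univ i⟩⟩
  refine not_adj_of_mem_slabEdges hM he₀ hbk hak hi (Sym2.mem_mk_right _ _)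
    (Sym2.mem_mk_right _ _) (stackedBook_adj.mpr (Or.inr ⟨hw ▸ hbk, hiw⟩))

lemma slabEdges_eq_empty (hM : IsInducedMatching (stackedBook m n) M)
    (hab : (pathGraph n).Adj a b) (hbk : (pathGraph n).Adj b k) (hak : a ≠ k)
    (he₀ : s((0, k), (0, b)) ∈ M) : slabEdges M a b = ∅ := by
  refine Finset.eq_empty_of_forall_notMem fun f hf => ?_
  rcases mem_slabEdges_cases hM he₀ hbk hak hf with hf₀ | ⟨i, rfl⟩
  · exact not_adj_of_mem_slabEdges hM he₀ hbk hak hf hf₀ (Sym2.mem_mk_right _ _)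
      (stackedBook_adj.mpr (Or.inr ⟨hab, rfl⟩))
  · have hi := ne_zero_of_rung_mem_slabEdges hM he₀ hbk hak hf
    exact not_adj_of_mem_slabEdges hM he₀ hbk hak hf (Sym2.mem_mk_right _ _)
      (Sym2.mem_mk_right _ _) (stackedBook_adj.mpr (Or.inl ⟨⟨hi, Or.inr rfl⟩, rfl⟩))

end Slab

lemma card_le_one_add_card_slabEdges {m : ℕ} [NeZero m] {M : Finset (Sym2 (Fin m × Fin 5))}
    {w : Fin m × Fin 5} (hM : IsInducedMatching (stackedBook m 5) M)
    (he₀ : s(((0 : Fin m), (2 : Fin 5)), w) ∈ M) :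
    M.card ≤ 1 + (slabEdges M 0 1).card + (slabEdges M 4 3).card := by
  have hsub : M ⊆ insert s((0, 2), w) (slabEdges M 0 1 ∪ slabEdges M 4 3) := by
    intro f hf
    rw [Finset.mem_insert, Finset.mem_union]
    refine or_iff_not_imp_left.mpr fun hne => ?_
    induction f using Sym2.ind with
    | _ u v =>
    have hu := snd_ne_of_mem_of_ne hM he₀ hf hne (Sym2.mem_mk_left u v)
    have hv := snd_ne_of_mem_of_ne hM he₀ hf hne (Sym2.mem_mk_right u v)
    have huv := stackedBook_adj.mp (hM.adj hf)
    simp only [slabEdges, Finset.mem_filter, Sym2.ball, hf, true_and]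
    simp only [pathGraph_adj, Fin.ext_iff] at hu hv huv ⊢
    omega
  calc M.card ≤ (insert s((0, 2), w) (slabEdges M 0 1 ∪ slabEdges M 4 3)).card :=
        Finset.card_le_card hsub
    _ ≤ (slabEdges M 0 1 ∪ slabEdges M 4 3).card + 1 := Finset.card_insert_le _ _
    _ ≤ 1 + (slabEdges M 0 1).card + (slabEdges M 4 3).card := by
        have := Finset.card_union_le (slabEdges M 0 1) (slabEdges M 4 3)
        omega

theorem card_le_of_middle_center_saturated_five (m : ℕ) (hm : 3 ≤ m)
    (M : Finset (Sym2 (Fin m × Fin 5))) (hM : IsInducedMatching (stackedBook m 5) M)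
    (hsat : ∃ e ∈ M, ((⟨0, by omega⟩ : Fin m), (2 : Fin 5)) ∈ e) :
    M.card ≤ 2 * m - 3 := by
  have : NeZero m := ⟨by omega⟩
  obtain ⟨e₀, he₀, hc⟩ := hsat
  obtain ⟨w, rfl⟩ := Sym2.mem_iff_exists.mp hc
  change s(((0 : Fin m), (2 : Fin 5)), w) ∈ M at he₀
  have h01 : (pathGraph 5).Adj 0 1 := by simp [pathGraph_adj]
  have h12 : (pathGraph 5).Adj 1 2 := by simp [pathGraph_adj]
  have h43 : (pathGraph 5).Adj 4 3 := by simp [pathGraph_adj]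
  have h32 : (pathGraph 5).Adj 3 2 := by simp [pathGraph_adj]
  have hcard := card_le_one_add_card_slabEdges hM he₀
  rcases stackedBook_adj.mp (hM.adj he₀) with ⟨-, hw⟩ | ⟨hw, hw₁⟩
  · have hl := card_slabEdges_le_sub_two hM he₀ h12 (by decide) hm hw.symm (a := 0)
    have hr := card_slabEdges_le_sub_two hM he₀ h32 (by decide) hm hw.symm (a := 4)
    omega
  · obtain ⟨i, x⟩ := w
    obtain rfl : i = 0 := hw₁.symm
    have hx : x = 1 ∨ x = 3 := by
      simp only [pathGraph_adj, Fin.ext_iff] at hw ⊢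
      omega
    rcases hx with rfl | rfl
    · have hr := card_slabEdges_le_sub_one hM he₀ h32 (by decide) (by omega) (a := 4)
      rw [slabEdges_eq_empty hM h01 h12 (by decide) he₀, Finset.card_empty] at hcard
      omega
    · have hl := card_slabEdges_le_sub_one hM he₀ h12 (by decide) (by omega) (a := 0)
      rw [slabEdges_eq_empty hM h43 h32 (by decide) he₀, Finset.card_empty] at hcard
      omega
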